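/- Let Δ = [a,b] be an integer segment and 𝔪 = (Δ₁, …, Δ_N) a list of integer segments such that no Δ_i is juxtaposed with Δ (juxtaposed means linked and disjoint). Let 𝔪₁ be the sub-multisegment of those Δ_i with (e(Δ_i), b(Δ_i)) ≤ (b, a) lexicographically (Δ_i ≤_e Δ). Then, defining Δ^t as the multisegment of singletons {a} + {a+1} + ⋯ + {b}, the Møglin–Waldspurger transform satisfies (𝔪₁ + Δ^t)^t = 𝔪₁^t + Δ. -/

import Mathlib

/-- A segment `[a, b]` of integers (meaningful when `a ≤ b`). -/
structure Seg where
  a : ℤ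
  b : ℤ
deriving DecidableEq

/-- `Δ` is a genuine segment, i.e. `a ≤ b`. -/
def Seg.IsSeg (Δ : Seg) : Prop := Δ.a ≤ Δ.b

/-- Containment of segments `Δ ⊆ Δ'`. -/
def Seg.Sub (Δ Δ' : Seg) : Prop := Δ'.a ≤ Δ.a ∧ Δ.b ≤ Δ'.b

/-- `Δ` and `Δ'` are linked: their union is again a segment (interval) but neither is
contained in the other. -/
def Seg.Linked (Δ Δ' : Seg) : Prop :=
  max Δ.a Δ'.a ≤ min Δ.b Δ'.b + 1 ∧ ¬ Δ.Sub Δ' ∧ ¬ Δ'.Sub Δ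

/-- `Δ` precedes `Δ'` (`Δ ≺ Δ'`): they are linked and `Δ` starts strictly earlier. -/
def Seg.Prec (Δ Δ' : Seg) : Prop := Δ.Linked Δ' ∧ Δ.a < Δ'.a

instance (Δ Δ' : Seg) : Decidable (Δ.Prec Δ') := by
  unfold Seg.Prec Seg.Linked Seg.Sub; infer_instance

/-- The list of segments of a multisegment arranged in right-aligned (decreasing `≥ₑ`)
order: decreasing lexicographic order on (right endpoint, left endpoint). -/
noncomputable def sortedSegs (𝔫 : Multiset Seg) : List Seg :=
  𝔫.toList.mergeSort (fun Δ Δ' => decide (Δ'.b < Δ.b ∨ (Δ'.b = Δ.b ∧ Δ'.a ≤ Δ.a)))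

/-- What remains of a segment after removing its right endpoint (empty list if the
segment was a singleton). -/
def truncRem (Δ : Seg) : List Seg := if Δ.a ≤ Δ.b - 1 then [⟨Δ.a, Δ.b - 1⟩] else []

/-- One pass of the Møglin–Waldspurger step along the (right-aligned) tail of the list:
given the currently chosen segment `cur`, find the first later segment `Δ` with
`Δ ≺ cur` and `e(Δ) = e(cur) − 1`, and continue from it. Returns the right endpoint of
the last chosen segment together with the remainder of the multisegment (the chosen
segments having lost their right endpoints). -/
def mwGo : Seg → List Seg → ℤ × List Seg
  | cur, [] => (cur.b, truncRem cur)
  | cur, Δ :: rest =>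
    if Δ.Prec cur ∧ Δ.b = cur.b - 1 then
      let p := mwGo Δ rest
      (p.1, truncRem cur ++ p.2)
    else
      let p := mwGo cur rest
      (p.1, Δ :: p.2)

/-- One step of the Møglin–Waldspurger algorithm: returns the first segment of `𝔫^t`
(formed by the extracted right endpoints) and the remaining multisegment `𝔫⁻`. -/
noncomputable def mwStep (𝔫 : Multiset Seg) : Seg × Multiset Seg :=
  match sortedSegs 𝔫 with
  | [] => (⟨0, -1⟩, 0)
  | Δ :: rest =>
    let p := mwGo Δ rest
    (⟨p.1, Δ.b⟩, (p.2 : Multiset Seg))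

/-- The total length of a multisegment (number of points counted with multiplicity). -/
def mlen (𝔫 : Multiset Seg) : ℕ := (𝔫.map (fun Δ => (Δ.b - Δ.a + 1).toNat)).sum

noncomputable def mwTAux : ℕ → Multiset Seg → Multiset Seg
  | 0, _ => 0
  | fuel + 1, 𝔫 => if 𝔫 = 0 then 0 else (mwStep 𝔫).1 ::ₘ mwTAux fuel (mwStep 𝔫).2

/-- The Møglin–Waldspurger transform `𝔫 ↦ 𝔫^t` of a multisegment: repeatedly extract the
segment of right endpoints produced by `mwStep`. (Each step removes at least one point of
`𝔫`, so `mlen 𝔫` steps always suffice.) -/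
noncomputable def mwT (𝔫 : Multiset Seg) : Multiset Seg := mwTAux (mlen 𝔫) 𝔫

/-- `Δ` and `Δ'` are juxtaposed: linked and disjoint. -/
def Seg.Juxt (Δ Δ' : Seg) : Prop := Δ.Linked Δ' ∧ (Δ.b < Δ'.a ∨ Δ'.b < Δ.a)

/-- `Δ^t`: the multisegment consisting of the singleton segments `{c}`, `c ∈ Δ`. -/
noncomputable def segT (Δ : Seg) : Multiset Seg := (Finset.Icc Δ.a Δ.b).val.map (fun c => ⟨c, c⟩)

def seglen (s : Seg) : ℕ := (s.b - s.a + 1).toNat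

lemma seglen_pos {s : Seg} (h : s.IsSeg) : 1 ≤ seglen s := by
  unfold Seg.IsSeg at h; unfold seglen; omega

lemma truncRem_spec (cur : Seg) (h : cur.IsSeg) :
    (∀ s ∈ truncRem cur, s.IsSeg) ∧ ((truncRem cur).map seglen).sum + 1 = seglen cur := by
  unfold Seg.IsSeg at h
  unfold truncRem
  split
  next hif =>
    constructor
    · intro s hs; simp only [List.mem_singleton] at hs; subst hs
      show (⟨cur.a, cur.b - 1⟩ : Seg).a ≤ (⟨cur.a, cur.b - 1⟩ : Seg).b
      dsimp only; omega
    · simp only [List.map_cons, List.map_nil, List.sum_cons, List.sum_nil]; unfold seglen; dsimp only; omega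
  next hif =>
    constructor
    · intro s hs; simp at hs
    · simp only [List.map_nil, List.sum_nil]; unfold seglen; omega

lemma mwGo_spec (rest : List Seg) : ∀ (cur : Seg), cur.IsSeg → (∀ s ∈ rest, s.IsSeg) →
    (∀ s ∈ (mwGo cur rest).2, s.IsSeg) ∧
    ((mwGo cur rest).2.map seglen).sum + 1 ≤ seglen cur + (rest.map seglen).sum := by
  induction rest with
  | nil =>
    intro cur hc _
    obtain ⟨h1, h2⟩ := truncRem_spec cur hc
    simp only [mwGo, List.map_nil, List.sum_nil]
    exact ⟨h1, by omega⟩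
  | cons q rest₁ ih =>
    intro cur hc hg
    have hq : q.IsSeg := hg q (List.mem_cons_self)
    have hg₁ : ∀ s ∈ rest₁, s.IsSeg := fun s hs => hg s (List.mem_cons_of_mem _ hs)
    simp only [mwGo]
    split
    · obtain ⟨h1, h2⟩ := truncRem_spec cur hc
      obtain ⟨h3, h4⟩ := ih q hq hg₁
      constructor
      · intro s hs
        rcases List.mem_append.mp hs with h | h
        · exact h1 s h
        · exact h3 s h
      · simp only [List.map_append, List.sum_append, List.map_cons, List.sum_cons]
        omega
    · obtain ⟨h3, h4⟩ := ih cur hc hg₁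
      constructor
      · intro s hs
        rcases List.mem_cons.mp hs with h | h
        · subst h; exact hq
        · exact h3 s h
      · simp only [List.map_cons, List.sum_cons]
        omega

lemma sortedSegs_coe (𝔫 : Multiset Seg) : ((sortedSegs 𝔫 : List Seg) : Multiset Seg) = 𝔫 := by
  unfold sortedSegs
  rw [Multiset.coe_eq_coe.mpr (List.mergeSort_perm _ _)]
  exact Multiset.coe_toList 𝔫

lemma mlen_coe (l : List Seg) : mlen (l : Multiset Seg) = (l.map seglen).sum := by
  unfold mlen seglen
  rw [Multiset.map_coe, Multiset.sum_coe]

lemma seglen_le_mlen {s : Seg} {𝔫 : Multiset Seg} (h : s ∈ 𝔫) : seglen s ≤ mlen 𝔫 :=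
  Multiset.single_le_sum (fun x _ => Nat.zero_le x) _
    (Multiset.mem_map_of_mem (fun Δ => (Δ.b - Δ.a + 1).toNat) h)

lemma mlen_pos {𝔫 : Multiset Seg} (hg : ∀ s ∈ 𝔫, s.IsSeg) (h0 : 𝔫 ≠ 0) : 1 ≤ mlen 𝔫 := by
  obtain ⟨s, hs⟩ := Multiset.exists_mem_of_ne_zero h0
  have := seglen_le_mlen hs
  have := seglen_pos (hg s hs)
  omega

lemma mlen_eq_zero {𝔫 : Multiset Seg} (hg : ∀ s ∈ 𝔫, s.IsSeg) (h : mlen 𝔫 = 0) : 𝔫 = 0 := by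
  by_contra hne
  have := mlen_pos hg hne
  omega

lemma mwStep_spec (𝔫 : Multiset Seg) (h0 : 𝔫 ≠ 0) (hg : ∀ s ∈ 𝔫, s.IsSeg) :
    (∀ s ∈ (mwStep 𝔫).2, s.IsSeg) ∧ mlen (mwStep 𝔫).2 < mlen 𝔫 := by
  have hco := sortedSegs_coe 𝔫
  obtain ⟨hd, t, hL⟩ : ∃ hd t, sortedSegs 𝔫 = hd :: t := by
    cases hLs : sortedSegs 𝔫 with
    | nil => rw [hLs] at hco; exact absurd hco.symm h0
    | cons x l => exact ⟨x, l, rfl⟩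
  rw [hL] at hco
  have hmem : ∀ s ∈ hd :: t, s.IsSeg := by
    intro s hs
    exact hg s (by rw [← hco]; exact Multiset.mem_coe.mpr hs)
  obtain ⟨h1, h2⟩ := mwGo_spec t hd (hmem hd (List.mem_cons_self))
    (fun s hs => hmem s (List.mem_cons_of_mem _ hs))
  unfold mwStep
  rw [hL]
  dsimp only
  constructor
  · intro s hs; exact h1 s (Multiset.mem_coe.mp hs)
  · rw [mlen_coe, ← hco, mlen_coe]
    simp only [List.map_cons, List.sum_cons]
    omega

lemma mwTAux_zero (f : ℕ) : mwTAux f 0 = 0 := by cases f <;> simp [mwTAux]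

lemma mwTAux_congr : ∀ (n : ℕ) (𝔫 : Multiset Seg) (f g : ℕ), (∀ s ∈ 𝔫, s.IsSeg) →
    mlen 𝔫 ≤ n → mlen 𝔫 ≤ f → mlen 𝔫 ≤ g → mwTAux f 𝔫 = mwTAux g 𝔫 := by
  intro n
  induction n with
  | zero =>
    intro 𝔫 f g hg hn _ _
    rw [mlen_eq_zero hg (Nat.le_zero.mp hn), mwTAux_zero, mwTAux_zero]
  | succ n ih =>
    intro 𝔫 f g hg hn hf hgl
    by_cases h0 : 𝔫 = 0
    · subst h0; rw [mwTAux_zero, mwTAux_zero]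
    · obtain ⟨hg', hlt⟩ := mwStep_spec 𝔫 h0 hg
      have hpos := mlen_pos hg h0
      obtain ⟨f', rfl⟩ : ∃ f', f = f' + 1 := ⟨f - 1, by omega⟩
      obtain ⟨g', rfl⟩ : ∃ g', g = g' + 1 := ⟨g - 1, by omega⟩
      simp only [mwTAux, if_neg h0]
      congr 1
      exact ih _ f' g' hg' (by omega) (by omega) (by omega)

lemma mwTAux_eq_mwT (f : ℕ) (𝔫 : Multiset Seg) (hg : ∀ s ∈ 𝔫, s.IsSeg)
    (hf : mlen 𝔫 ≤ f) : mwTAux f 𝔫 = mwT 𝔫 :=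
  mwTAux_congr f 𝔫 f (mlen 𝔫) hg hf hf le_rfl

def rel (s t : Seg) : Prop := t.b < s.b ∨ (t.b = s.b ∧ t.a ≤ s.a)

lemma sortedSegs_pairwise (𝔫 : Multiset Seg) : List.Pairwise rel (sortedSegs 𝔫) := by
  have h := List.pairwise_mergeSort
    (le := fun (Δ Δ' : Seg) => decide (Δ'.b < Δ.b ∨ (Δ'.b = Δ.b ∧ Δ'.a ≤ Δ.a)))
    (fun x y z hxy hyz => by simp only [decide_eq_true_eq] at *; omega)
    (fun x y => by simp only [Bool.or_eq_true, decide_eq_true_eq]; omega)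
    𝔫.toList
  exact h.imp (fun {x y} hxy => of_decide_eq_true hxy)

lemma Icc_val_cons {a b : ℤ} (h : a ≤ b) :
    (Finset.Icc a b).val = b ::ₘ (Finset.Icc a (b-1)).val := by
  have h1 : Finset.Icc a b = insert b (Finset.Icc a (b-1)) := by
    ext x; simp only [Finset.mem_Icc, Finset.mem_insert]; omega
  rw [h1, Finset.insert_val_of_notMem (by simp only [Finset.mem_Icc]; omega)]

lemma prec_singleton {s : Seg} (hs : s.IsSeg) {c : ℤ} (hb : s.b = c - 1) :
    s.Prec ⟨c, c⟩ := by
  unfold Seg.IsSeg at hs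
  unfold Seg.Prec Seg.Linked Seg.Sub
  dsimp only
  omega

lemma truncRem_singleton (c : ℤ) : truncRem ⟨c, c⟩ = [] := by
  unfold truncRem; rw [if_neg (by dsimp only; omega)]

lemma mwGo_singles (a : ℤ) (rest : List Seg) : ∀ (c : ℤ) (M : Multiset Seg), a ≤ c →
    (∀ s ∈ rest, s.IsSeg) → (∀ s ∈ rest, s.b ≠ a - 1) →
    List.Pairwise rel rest →
    (rest : Multiset Seg) = M + (Finset.Icc a (c-1)).val.map (fun d => (⟨d, d⟩ : Seg)) →
    (mwGo ⟨c, c⟩ rest).1 = a ∧ ((mwGo ⟨c, c⟩ rest).2 : Multiset Seg) = M := by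
  induction rest with
  | nil =>
    intro c M hac hg hb hp hM
    rw [Multiset.coe_nil] at hM
    have hM0 : M = 0 ∧ ((Finset.Icc a (c-1)).val.map (fun d => (⟨d, d⟩ : Seg))) = 0 := by
      constructor
      · exact Multiset.le_zero.mp (hM ▸ Multiset.le_add_right M _)
      · exact Multiset.le_zero.mp (hM ▸ Multiset.le_add_left _ M)
    have hIcc : Finset.Icc a (c-1) = ∅ := by
      have := hM0.2
      rw [Multiset.map_eq_zero, Finset.val_eq_zero] at this
      exact this
    have hca : c = a := by
      by_contra hne
      have : a ≤ c - 1 := by omega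
      have : (a : ℤ) ∈ Finset.Icc a (c-1) := Finset.mem_Icc.mpr ⟨le_refl a, this⟩
      rw [hIcc] at this
      exact absurd this (Finset.notMem_empty a)
    subst hca
    simp only [mwGo, truncRem_singleton, Multiset.coe_nil]
    exact ⟨trivial, hM0.1.symm⟩
  | cons p rest₁ ih =>
    intro c M hac hg hb hp hM
    have hgp : p.IsSeg := hg p (List.mem_cons_self)
    have hg₁ : ∀ s ∈ rest₁, s.IsSeg := fun s hs => hg s (List.mem_cons_of_mem _ hs)
    have hb₁ : ∀ s ∈ rest₁, s.b ≠ a - 1 := fun s hs => hb s (List.mem_cons_of_mem _ hs)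
    obtain ⟨hrelp, hp₁⟩ := List.pairwise_cons.mp hp
    rw [← Multiset.cons_coe] at hM
    by_cases hpb : p.b = c - 1
    · -- picked case
      have hca : a < c := by
        have := hb p (List.mem_cons_self)
        omega
      have hS : (Finset.Icc a (c-1)).val.map (fun d => (⟨d, d⟩ : Seg)) =
          (⟨c-1, c-1⟩ : Seg) ::ₘ (Finset.Icc a (c-1-1)).val.map (fun d => (⟨d, d⟩ : Seg)) := by
        rw [Icc_val_cons (by omega : a ≤ c - 1), Multiset.map_cons]
      have hpeq : p = ⟨c-1, c-1⟩ := by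
        have hmem : (⟨c-1, c-1⟩ : Seg) ∈ (p ::ₘ (rest₁ : Multiset Seg)) := by
          rw [hM, hS]
          exact Multiset.mem_add.mpr (Or.inr (Multiset.mem_cons_self _ _))
        rcases Multiset.mem_cons.mp hmem with h | h
        · exact h.symm
        · have hr := hrelp _ (Multiset.mem_coe.mp h)
          unfold rel at hr
          dsimp only at hr
          unfold Seg.IsSeg at hgp
          cases p
          simp only [Seg.mk.injEq]
          dsimp only at hpb hr hgp
          omega
      subst hpeq
      have hM' : (rest₁ : Multiset Seg) =
          M + (Finset.Icc a (c-1-1)).val.map (fun d => (⟨d, d⟩ : Seg)) := by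
        rw [hS] at hM
        rw [Multiset.add_cons] at hM
        exact (Multiset.cons_inj_right _).mp hM
      obtain ⟨ih1, ih2⟩ := ih (c-1) M (by omega) hg₁ hb₁ hp₁ (by
        have : c - 1 - 1 = c - 1 - 1 := rfl
        exact hM')
      simp only [mwGo]
      rw [if_pos ⟨prec_singleton hgp rfl, trivial⟩]
      dsimp only
      rw [truncRem_singleton, List.nil_append]
      exact ⟨ih1, ih2⟩
    · -- not picked case
      have hnotpick : ¬ (p.Prec ⟨c, c⟩ ∧ p.b = (⟨c, c⟩ : Seg).b - 1) := by
        intro h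
        exact hpb h.2
      have hpS : p ∉ (Finset.Icc a (c-1)).val.map (fun d => (⟨d, d⟩ : Seg)) := by
        intro hmemS
        obtain ⟨d, hd, hpd⟩ := Multiset.mem_map.mp hmemS
        rw [Finset.mem_val, Finset.mem_Icc] at hd
        have hpbd : p.b = d := by rw [← hpd]
        have hmem : (⟨c-1, c-1⟩ : Seg) ∈ (p ::ₘ (rest₁ : Multiset Seg)) := by
          rw [hM]
          refine Multiset.mem_add.mpr (Or.inr ?_)
          exact Multiset.mem_map.mpr ⟨c-1, Finset.mem_val.mpr (Finset.mem_Icc.mpr ⟨by omega, le_refl _⟩), rfl⟩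
        rcases Multiset.mem_cons.mp hmem with h | h
        · exact hpb (by rw [← h])
        · have hr := hrelp _ (Multiset.mem_coe.mp h)
          unfold rel at hr
          dsimp only at hr
          omega
      have hpM : p ∈ M := by
        have : p ∈ M + (Finset.Icc a (c-1)).val.map (fun d => (⟨d, d⟩ : Seg)) := by
          rw [← hM]; exact Multiset.mem_cons_self _ _
        rcases Multiset.mem_add.mp this with h | h
        · exact h
        · exact absurd h hpS
      have hM' : (rest₁ : Multiset Seg) =
          M.erase p + (Finset.Icc a (c-1)).val.map (fun d => (⟨d, d⟩ : Seg)) := by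
        have h1 : p ::ₘ (M.erase p + (Finset.Icc a (c-1)).val.map (fun d => (⟨d, d⟩ : Seg)))
            = p ::ₘ (rest₁ : Multiset Seg) := by
          rw [← Multiset.cons_add, Multiset.cons_erase hpM, ← hM]
        exact ((Multiset.cons_inj_right _).mp h1).symm
      obtain ⟨ih1, ih2⟩ := ih c (M.erase p) hac hg₁ hb₁ hp₁ hM'
      simp only [mwGo]
      rw [if_neg hnotpick]
      dsimp only
      refine ⟨ih1, ?_⟩
      rw [← Multiset.cons_coe, ih2, Multiset.cons_erase hpM]

lemma juxt_of_endpoint {s Δ : Seg} (hs : s.IsSeg) (hΔ : Δ.IsSeg) (h : s.b = Δ.a - 1) :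
    s.Juxt Δ := by
  unfold Seg.IsSeg at hs hΔ
  unfold Seg.Juxt Seg.Linked Seg.Sub
  omega

/-- If no segment of the multisegment `𝔪` is juxtaposed with the segment `Δ = [a,b]`, and
`𝔪₁` consists of the segments of `𝔪` that are `≤ₑ Δ` (lexicographically on (right
endpoint, left endpoint)), then the Møglin–Waldspurger transform satisfies
`(𝔪₁ + Δ^t)^t = 𝔪₁^t + Δ`. -/
theorem mw_transform_add_singletons (Δ : Seg) (hΔ : Δ.IsSeg) (𝔪 : Multiset Seg)
    (hseg : ∀ s ∈ 𝔪, Seg.IsSeg s) (hjux : ∀ s ∈ 𝔪, ¬ Seg.Juxt s Δ) :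
    mwT (𝔪.filter (fun s => s.b < Δ.b ∨ (s.b = Δ.b ∧ s.a ≤ Δ.a)) + segT Δ) =
      Δ ::ₘ mwT (𝔪.filter (fun s => s.b < Δ.b ∨ (s.b = Δ.b ∧ s.a ≤ Δ.a))) := by
  have hΔ' : Δ.a ≤ Δ.b := hΔ
  set m₁ := 𝔪.filter (fun s => s.b < Δ.b ∨ (s.b = Δ.b ∧ s.a ≤ Δ.a)) with hm₁def
  set N := m₁ + segT Δ with hNdef
  have hgm₁ : ∀ s ∈ m₁, s.IsSeg := fun s hs => hseg s (Multiset.mem_of_mem_filter hs)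
  have hgN : ∀ s ∈ N, s.IsSeg := by
    intro s hs
    rcases Multiset.mem_add.mp hs with h | h
    · exact hgm₁ s h
    · obtain ⟨c, _, rfl⟩ := Multiset.mem_map.mp h
      exact le_refl c
  have hbN : ∀ s ∈ N, s.b ≤ Δ.b := by
    intro s hs
    rcases Multiset.mem_add.mp hs with h | h
    · have := (Multiset.mem_filter.mp h).2
      rcases this with h' | h' <;> omega
    · obtain ⟨c, hc, rfl⟩ := Multiset.mem_map.mp h
      rw [Finset.mem_val, Finset.mem_Icc] at hc
      exact hc.2
  have hbb : (⟨Δ.b, Δ.b⟩ : Seg) ∈ N := by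
    refine Multiset.mem_add.mpr (Or.inr ?_)
    exact Multiset.mem_map.mpr ⟨Δ.b, Finset.mem_val.mpr (Finset.mem_Icc.mpr ⟨hΔ', le_refl _⟩), rfl⟩
  have hco := sortedSegs_coe N
  have hpw := sortedSegs_pairwise N
  obtain ⟨hd, t, hL⟩ : ∃ hd t, sortedSegs N = hd :: t := by
    cases hLs : sortedSegs N with
    | nil =>
      exfalso
      rw [hLs, Multiset.coe_nil] at hco
      rw [← hco] at hbb
      exact absurd hbb (Multiset.notMem_zero _)
    | cons x l => exact ⟨x, l, rfl⟩
  rw [hL] at hco hpw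
  have hmemN : ∀ s ∈ hd :: t, s ∈ N := by
    intro s hs
    rw [← hco]
    exact Multiset.mem_coe.mpr hs
  have hhd : hd = ⟨Δ.b, Δ.b⟩ := by
    have hmem : (⟨Δ.b, Δ.b⟩ : Seg) ∈ hd :: t := by
      have hx := hbb
      rw [← hco] at hx
      exact Multiset.mem_coe.mp hx
    rcases List.mem_cons.mp hmem with h | h
    · exact h.symm
    · have hr := (List.pairwise_cons.mp hpw).1 _ h
      have h1 : hd.b ≤ Δ.b := hbN hd (hmemN hd (List.mem_cons_self))
      have h2 : hd.IsSeg := hgN hd (hmemN hd (List.mem_cons_self))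
      unfold rel at hr
      unfold Seg.IsSeg at h2
      dsimp only at hr
      cases hd
      simp only [Seg.mk.injEq]
      dsimp only at h1 h2 hr
      omega
  have hnjx : ∀ s ∈ t, s.b ≠ Δ.a - 1 := by
    intro s hs hsb
    have hsN := hmemN s (List.mem_cons_of_mem _ hs)
    rcases Multiset.mem_add.mp hsN with h | h
    · exact hjux s (Multiset.mem_of_mem_filter h)
        (juxt_of_endpoint (hseg s (Multiset.mem_of_mem_filter h)) hΔ hsb)
    · obtain ⟨c, hc, rfl⟩ := Multiset.mem_map.mp h
      rw [Finset.mem_val, Finset.mem_Icc] at hc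
      dsimp only at hsb
      omega
  have hMt : (t : Multiset Seg) =
      m₁ + (Finset.Icc Δ.a (Δ.b - 1)).val.map (fun d => (⟨d, d⟩ : Seg)) := by
    have h2 : ((hd :: t : List Seg) : Multiset Seg) = N := hco
    rw [hhd, ← Multiset.cons_coe] at h2
    rw [hNdef] at h2
    unfold segT at h2
    rw [Icc_val_cons hΔ', Multiset.map_cons, Multiset.add_cons] at h2
    exact (Multiset.cons_inj_right _).mp h2
  obtain ⟨hres1, hres2⟩ := mwGo_singles Δ.a t Δ.b m₁ hΔ'
    (fun s hs => hgN s (hmemN s (List.mem_cons_of_mem _ hs))) hnjx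
    (List.pairwise_cons.mp hpw).2 hMt
  have hstep : mwStep N = (Δ, m₁) := by
    unfold mwStep
    rw [hL]
    dsimp only
    rw [hhd, hres1, hres2]
  have hne : N ≠ 0 := fun h => by rw [h] at hbb; exact absurd hbb (Multiset.notMem_zero _)
  have hm₁len : mlen m₁ < mlen N := by
    have h1 : seglen ⟨Δ.b, Δ.b⟩ ≤ mlen (segT Δ) := seglen_le_mlen (by
      exact Multiset.mem_map.mpr ⟨Δ.b, Finset.mem_val.mpr (Finset.mem_Icc.mpr ⟨hΔ', le_refl _⟩), rfl⟩)
    have h2 : 1 ≤ seglen (⟨Δ.b, Δ.b⟩ : Seg) := seglen_pos (le_refl Δ.b)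
    have h3 : mlen N = mlen m₁ + mlen (segT Δ) := by
      rw [hNdef]
      unfold mlen
      rw [Multiset.map_add, Multiset.sum_add]
    omega
  obtain ⟨n, hn⟩ : ∃ n, mlen N = n + 1 := ⟨mlen N - 1, by omega⟩
  show mwT N = Δ ::ₘ mwT m₁
  unfold mwT
  rw [hn]
  simp only [mwTAux, if_neg hne, hstep]
  congr 1
  exact mwTAux_eq_mwT n m₁ hgm₁ (by omega)
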